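/- arXiv:1703.02272 — 5 statements merged into one kernel-verified Lean document; each statement's English description precedes it below -/
import Mathlib

section
/- If W1 and W2 are finite subsets of ℤ² with W1 = {w0,w1,w2,w3} (four distinct points) and W2 = {w0,w1,w2,w3,w4} (five distinct points, so W1 ⊆ W2), then the Minkowski sumset W1 + W2 has cardinality at most 14. -/
/-!
By commutativity a sum `a + b` with `a, b ∈ W1` depends only on the unordered pair `{a, b}`, so
there are at most `C(5, 2) = 10` of them; the only other sums are the four `a + w4`.
-/

open Pointwise Finset

section SumsetCard

variable {α : Type*} [AddCommMagma α] [DecidableEq α]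

theorem Finset.card_add_self_le (A : Finset α) : #(A + A) ≤ (#A + 1).choose 2 := by
  rw [← card_sym2]
  have hsub : A + A ⊆ A.sym2.image (Sym2.lift ⟨(· + ·), add_comm⟩) := by
    intro x hx
    obtain ⟨a, ha, b, hb, rfl⟩ := mem_add.1 hx
    exact mem_image.2 ⟨s(a, b), mk_mem_sym2_iff.2 ⟨ha, hb⟩, rfl⟩
  exact (card_le_card hsub).trans card_image_le

theorem Finset.card_add_le_of_subset {A B : Finset α} (hAB : A ⊆ B) :
    #(A + B) ≤ (#A + 1).choose 2 + #A * #(B \ A) :=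
  calc #(A + B) = #((A + A) ∪ (A + (B \ A))) := by rw [← add_union, union_sdiff_of_subset hAB]
    _ ≤ #(A + A) + #(A + (B \ A)) := card_union_le _ _
    _ ≤ (#A + 1).choose 2 + #A * #(B \ A) := add_le_add A.card_add_self_le card_add_le

end SumsetCard

theorem sumset_card_le_fourteen_general (w0 w1 w2 w3 w4 : ℤ × ℤ)
    (W1 W2 : Finset (ℤ × ℤ))
    (hW1 : W1 = {w0, w1, w2, w3}) (hW2 : W2 = {w0, w1, w2, w3, w4}) :
    (W1 + W2).card ≤ 14 := by
  subst hW1 hW2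
  have hsub : ({w0, w1, w2, w3} : Finset (ℤ × ℤ)) ⊆ {w0, w1, w2, w3, w4} := by
    intro x; simp only [mem_insert, mem_singleton]; tauto
  have hcard : #({w0, w1, w2, w3} : Finset (ℤ × ℤ)) ≤ 4 := card_le_four
  have hdiff : #(({w0, w1, w2, w3, w4} : Finset (ℤ × ℤ)) \ {w0, w1, w2, w3}) ≤ 1 := by
    refine card_le_one.2 fun a ha b hb => ?_
    simp only [mem_sdiff, mem_insert, mem_singleton] at ha hb
    grind
  calc _ ≤ _ := card_add_le_of_subset hsub
    _ ≤ (4 + 1).choose 2 + 4 * 1 := by gcongr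
    _ = 14 := rfl

theorem sumset_card_le_fourteen (w0 w1 w2 w3 w4 : ℤ × ℤ)
    (hdist : ({w0, w1, w2, w3, w4} : Finset (ℤ × ℤ)).card = 5)
    (W1 W2 : Finset (ℤ × ℤ))
    (hW1 : W1 = {w0, w1, w2, w3}) (hW2 : W2 = {w0, w1, w2, w3, w4}) :
    (W1 + W2).card ≤ 14 :=
  sumset_card_le_fourteen_general w0 w1 w2 w3 w4 W1 W2 hW1 hW2
end

section
/- Let W1, W2 be nonempty finite subsets of ℤ² with |W1 ∪ W2| = 5. Then the discrete mixed volume D(W1,W2) = |W1 + W2| − |W1| − |W2| + 1 is at most 6. -/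
/-!
Split `W1 ∪ W2` into `I = W1 ∩ W2`, `A = W1 \ W2` and `B = W2 \ W1`. Then `W1 + W2` is covered by
`I + I`, `I + B`, `A + I` and `A + B`; by commutativity `I + I` has at most `(|I| + 1).choose 2`
elements, and the other three at most the product of the sizes. A case check over
`|I| + |A| + |B| = 5` shows that this bound never exceeds `|W1| + |W2| + 5`.
-/

open Pointwise Finset

namespace Finset

variable {G : Type*} [DecidableEq G] [AddCommMagma G]

theorem card_add_self_le_choose_two (s : Finset G) : #(s + s) ≤ (#s + 1).choose 2 := by
  calc #(s + s) ≤ #(s.sym2.image (Sym2.lift ⟨(· + ·), add_comm⟩)) := card_le_card ?_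
    _ ≤ #s.sym2 := card_image_le
    _ = (#s + 1).choose 2 := card_sym2 s
  intro x hx
  obtain ⟨a, ha, b, hb, rfl⟩ := mem_add.1 hx
  exact mem_image.2 ⟨s(a, b), mk_mem_sym2_iff.2 ⟨ha, hb⟩, rfl⟩

theorem card_add_le_of_inter_sdiff (s t : Finset G) :
    #(s + t) ≤ (#(s ∩ t) + 1).choose 2 + #(s ∩ t) * #(t \ s) + #(s \ t) * #(s ∩ t) +
      #(s \ t) * #(t \ s) := by
  have ht : s ∩ t ∪ t \ s = t := by rw [union_comm, inter_comm, sdiff_union_inter]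
  calc #(s + t)
        = #(((s ∩ t + s ∩ t) ∪ (s ∩ t + t \ s)) ∪ ((s \ t + s ∩ t) ∪ (s \ t + t \ s))) := by
        rw [← add_union, ← add_union, ← union_add, ht, union_comm, sdiff_union_inter]
    _ ≤ #(s ∩ t + s ∩ t) + #(s ∩ t + t \ s) + (#(s \ t + s ∩ t) + #(s \ t + t \ s)) :=
        (card_union_le _ _).trans (add_le_add (card_union_le _ _) (card_union_le _ _))
    _ ≤ _ := by
        grw [card_add_self_le_choose_two, card_add_le, card_add_le, card_add_le]
        omega

end Finset

theorem choose_two_add_mul_le_of_add_eq_five {i a b : ℕ} (h : i + a + b = 5) :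
    (i + 1).choose 2 + i * b + a * i + a * b ≤ (a + i) + (b + i) + 5 := by
  obtain rfl : b = 5 - i - a := by omega
  have hi : i ≤ 5 := by omega
  have ha : a ≤ 5 - i := by omega
  interval_cases i <;> interval_cases a <;> simp [Nat.choose]

theorem discrete_mixed_volume_le_six_general (W1 W2 : Finset (ℤ × ℤ))
    (hcard : (W1 ∪ W2).card = 5) :
    ((W1 + W2).card : ℤ) - W1.card - W2.card + 1 ≤ 6 := by
  have hW1 := card_sdiff_add_card_inter W1 W2
  have hW2 := card_sdiff_add_card_inter W2 W1
  have hU := card_union_add_card_inter W1 W2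
  rw [inter_comm] at hW2
  have hsum := card_add_le_of_inter_sdiff W1 W2
  have hbound := choose_two_add_mul_le_of_add_eq_five (i := #(W1 ∩ W2)) (a := #(W1 \ W2))
    (b := #(W2 \ W1)) (by omega)
  omega

theorem discrete_mixed_volume_le_six (W1 W2 : Finset (ℤ × ℤ))
    (h1 : W1.Nonempty) (h2 : W2.Nonempty)
    (hcard : (W1 ∪ W2).card = 5) :
    ((W1 + W2).card : ℤ) - W1.card - W2.card + 1 ≤ 6 :=
  discrete_mixed_volume_le_six_general W1 W2 hcard
end

section
/- The system of two real polynomial equations x⁶ + (44/31)y³ − y = 0 and y⁶ + (44/31)x³ − x = 0 has at least 5 solutions (x,y) with x > 0 and y > 0. -/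
/-!
On the positive quadrant the second equation says `y = φ x := (g x)^(1/6)` with `g t = t - c t³`,
so the positive solutions are the points `(x, φ x)` with `g (φ x) = x⁶`. For `c = 44/31` the
continuous function `H x = g (φ x) - x⁶` (`eliminant`) changes sign on five disjoint intervals
inside `[0.55, 0.83]`, where `g > 0`. The sign of `H` at an endpoint is certified by bracketing the
irrational value `φ x` between rationals `r ≤ φ x ≤ r'`, which pins `g (φ x)` between `r - c r'³`
and `r' - c r³`. The intermediate value theorem then gives five roots with distinct `x`-coordinates.
-/

open Set

noncomputable section

def cubicMap (c t : ℝ) : ℝ := t - c * t ^ 3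

def sixthRootCubic (c t : ℝ) : ℝ := cubicMap c t ^ ((6 : ℕ) : ℝ)⁻¹

def eliminant (c t : ℝ) : ℝ := cubicMap c (sixthRootCubic c t) - t ^ 6

section

variable {c t : ℝ}

lemma sixthRootCubic_pow_six (h : 0 ≤ cubicMap c t) : sixthRootCubic c t ^ 6 = cubicMap c t :=
  Real.rpow_inv_natCast_pow h (by norm_num)

lemma continuous_eliminant (c : ℝ) : Continuous (eliminant c) := by
  have hg : Continuous (cubicMap c) := by unfold cubicMap; fun_prop
  have hφ : Continuous (sixthRootCubic c) :=
    (Real.continuous_rpow_const (by positivity)).comp hg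
  exact (hg.comp hφ).sub (continuous_pow 6)

lemma cubicMap_pos (ht : 0 < t) (hct : c * t ^ 2 < 1) : 0 < cubicMap c t := by
  unfold cubicMap
  nlinarith

lemma sixthRootCubic_mem_Icc {r r' : ℝ} (hr : 0 ≤ r) (hr' : 0 ≤ r')
    (h : cubicMap c t ∈ Icc (r ^ 6) (r' ^ 6)) : sixthRootCubic c t ∈ Icc r r' := by
  have hg : 0 ≤ cubicMap c t := (pow_nonneg hr 6).trans h.1
  have hφ : 0 ≤ sixthRootCubic c t := Real.rpow_nonneg hg _
  rw [← sixthRootCubic_pow_six hg] at h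
  exact ⟨(pow_le_pow_iff_left₀ hr hφ (by norm_num)).1 h.1,
    (pow_le_pow_iff_left₀ hφ hr' (by norm_num)).1 h.2⟩

lemma eliminant_pos {r r' : ℝ} (hc : 0 ≤ c) (hr : 0 ≤ r) (hr' : 0 ≤ r')
    (h : cubicMap c t ∈ Icc (r ^ 6) (r' ^ 6)) (key : t ^ 6 < r - c * r' ^ 3) :
    0 < eliminant c t := by
  obtain ⟨hl, hu⟩ := sixthRootCubic_mem_Icc hr hr' h
  have := mul_le_mul_of_nonneg_left (pow_le_pow_left₀ (hr.trans hl) hu 3) hc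
  unfold eliminant cubicMap
  linarith

lemma eliminant_neg {r r' : ℝ} (hc : 0 ≤ c) (hr : 0 ≤ r) (hr' : 0 ≤ r')
    (h : cubicMap c t ∈ Icc (r ^ 6) (r' ^ 6)) (key : r' - c * r ^ 3 < t ^ 6) :
    eliminant c t < 0 := by
  obtain ⟨hl, hu⟩ := sixthRootCubic_mem_Icc hr hr' h
  have := mul_le_mul_of_nonneg_left (pow_le_pow_left₀ hr hl 3) hc
  unfold eliminant cubicMap
  linarith

lemma solution_of_eliminant_eq_zero (ht : 0 < t) (hg : 0 < cubicMap c t)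
    (hH : eliminant c t = 0) :
    0 < t ∧ 0 < sixthRootCubic c t ∧
      t ^ 6 + c * sixthRootCubic c t ^ 3 - sixthRootCubic c t = 0 ∧
      sixthRootCubic c t ^ 6 + c * t ^ 3 - t = 0 := by
  refine ⟨ht, Real.rpow_pos_of_pos hg _, ?_, ?_⟩
  · unfold eliminant cubicMap at hH
    linarith
  · rw [sixthRootCubic_pow_six hg.le, cubicMap]
    ring

end

lemma exists_strictMono_roots {f : ℝ → ℝ} (hf : Continuous f) {n : ℕ} (a b : Fin (n + 1) → ℝ)
    (hab : ∀ i, a i ≤ b i) (hsep : ∀ i : Fin n, b i.castSucc < a i.succ)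
    (hsign : ∀ i, (0 : ℝ) ∈ uIcc (f (a i)) (f (b i))) :
    ∃ x : Fin (n + 1) → ℝ, StrictMono x ∧ ∀ i, x i ∈ Icc (a i) (b i) ∧ f (x i) = 0 := by
  have hroot : ∀ i, 0 ∈ f '' Icc (a i) (b i) := fun i => by
    simpa only [uIcc_of_le (hab i)] using
      intermediate_value_uIcc (a := a i) (b := b i) hf.continuousOn (hsign i)
  choose x hx hfx using hroot
  refine ⟨x, Fin.strictMono_iff_lt_succ.2 fun i => ?_, fun i => ⟨hx i, hfx i⟩⟩
  exact ((hx _).2.trans_lt (hsep i)).trans_le (hx _).1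

def leftEnds : Fin 5 → ℝ := ![0.55, 0.70, 0.735, 0.752, 0.79]

def rightEnds : Fin 5 → ℝ := ![0.64, 0.731, 0.749, 0.78, 0.83]

lemma Icc_ends_subset (i : Fin 5) : Icc (leftEnds i) (rightEnds i) ⊆ Icc 0.55 0.83 :=
  Icc_subset_Icc (by fin_cases i <;> norm_num [leftEnds]) (by fin_cases i <;> norm_num [rightEnds])

lemma eliminant_sign_change (i : Fin 5) :
    (0 : ℝ) ∈ uIcc (eliminant (44 / 31) (leftEnds i)) (eliminant (44 / 31) (rightEnds i)) := by
  have pos {t : ℝ} (r r' : ℝ) (hr : 0 ≤ r) (hr' : 0 ≤ r')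
      (h : cubicMap (44 / 31) t ∈ Icc (r ^ 6) (r' ^ 6)) (key : t ^ 6 < r - 44 / 31 * r' ^ 3) :
      0 ≤ eliminant (44 / 31) t :=
    (eliminant_pos (by norm_num) hr hr' h key).le
  have neg {t : ℝ} (r r' : ℝ) (hr : 0 ≤ r) (hr' : 0 ≤ r')
      (h : cubicMap (44 / 31) t ∈ Icc (r ^ 6) (r' ^ 6)) (key : r' - 44 / 31 * r ^ 3 < t ^ 6) :
      eliminant (44 / 31) t ≤ 0 :=
    (eliminant_neg (by norm_num) hr hr' h key).le
  rw [Set.mem_uIcc]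
  -- each pair `r, r'` brackets `φ` at an endpoint to nine decimals
  fin_cases i <;> simp only [leftEnds, rightEnds]
  · refine .inr ⟨neg 0.802913531 0.802913532 ?_ ?_ ?_ ?_,
      pos 0.824368657 0.824368658 ?_ ?_ ?_ ?_⟩ <;> norm_num [cubicMap]
  · refine .inl ⟨neg 0.772890655 0.772890656 ?_ ?_ ?_ ?_,
      pos 0.749010733 0.749010734 ?_ ?_ ?_ ?_⟩ <;> norm_num [cubicMap]
  · refine .inr ⟨neg 0.731015417 0.731015418 ?_ ?_ ?_ ?_,
      pos 0.745323803 0.745323804 ?_ ?_ ?_ ?_⟩ <;> norm_num [cubicMap]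
  · refine .inl ⟨neg 0.727627080 0.727627081 ?_ ?_ ?_ ?_,
      pos 0.688418274 0.688418275 ?_ ?_ ?_ ?_⟩ <;> norm_num [cubicMap]
  · refine .inr ⟨neg 0.513956319 0.513956320 ?_ ?_ ?_ ?_,
      pos 0.669684011 0.669684012 ?_ ?_ ?_ ?_⟩ <;> norm_num [cubicMap]

theorem five_positive_solutions :
    ∃ S : Finset (ℝ × ℝ), 5 ≤ S.card ∧
      ∀ p ∈ S, 0 < p.1 ∧ 0 < p.2 ∧
        p.1 ^ 6 + (44 / 31) * p.2 ^ 3 - p.2 = 0 ∧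
        p.2 ^ 6 + (44 / 31) * p.1 ^ 3 - p.1 = 0 := by
  obtain ⟨x, hmono, hx⟩ := exists_strictMono_roots (continuous_eliminant (44 / 31))
    leftEnds rightEnds (fun i => by fin_cases i <;> norm_num [leftEnds, rightEnds])
    (fun i => by
      fin_cases i <;> norm_num [leftEnds, rightEnds, Fin.succ, Fin.castSucc, Fin.castAdd, Fin.castLE])
    eliminant_sign_change
  refine ⟨Finset.univ.image fun i => (x i, sixthRootCubic (44 / 31) (x i)), ?_, ?_⟩
  · rw [Finset.card_image_of_injective _ fun i j h => hmono.injective (congrArg Prod.fst h)]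
    simp
  · simp only [Finset.mem_image, Finset.mem_univ, true_and]
    rintro _ ⟨i, rfl⟩
    have hxi : x i ∈ Icc (0.55 : ℝ) 0.83 := Icc_ends_subset i (hx i).1
    have hpos : 0 < x i := by linarith [hxi.1]
    exact solution_of_eliminant_eq_zero hpos (cubicMap_pos hpos (by nlinarith [hxi.2])) (hx i).2
end
end

section
/- Let m1 > 0, n2 > 0 and m2 be integers. The map sending (y1, y2) ∈ (ℝ_{>0})² to (x, y2) with x = y1^{m1} gives a bijection between positive solutions (y1,y2) of the equation −1 + y1^{m1} + y1^{m2} y2^{n2} = 0 and pairs (x, y2) with 0 < x < 1 and y2 = x^{k}(1−x)^{l}, where k = −m2/(m1 n2) and l = 1/n2 (real exponents, x^k meaning exp(k·log x)). -/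
/-!
Put `x = y₁ ^ m₁`. Since `y₁ ^ m₂ * y₂ ^ n₂ > 0`, the equation says exactly that `x < 1` and
`y₁ ^ m₂ * y₂ ^ n₂ = 1 - x`; solving the latter for `y₂` by an `n₂`-th root gives
`y₂ = (y₁ ^ m₂) ^ (-1 / n₂) * (1 - x) ^ (1 / n₂)`, and `y₁ ^ m₂ = x ^ (m₂ / m₁)`.
-/

open Real

lemma Real.mul_zpow_eq_iff_eq_mul_rpow {a b c : ℝ} (ha : 0 < a) (hb : 0 < b) (hc : 0 < c)
    {n : ℤ} (hn : n ≠ 0) :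
    a * b ^ n = c ↔ b = a ^ (-1 / (n : ℝ)) * c ^ (1 / (n : ℝ)) := by
  have hroot : a ^ (-1 / (n : ℝ)) * c ^ (1 / (n : ℝ)) = (c / a) ^ (n : ℝ)⁻¹ := by
    rw [div_rpow hc.le ha.le, neg_div, rpow_neg ha.le, one_div, div_eq_inv_mul]
  rw [hroot, eq_rpow_inv hb.le (div_pos hc ha).le (Int.cast_ne_zero.2 hn), rpow_intCast,
    eq_div_iff ha.ne', mul_comm]

lemma Real.zpow_rpow_eq_zpow_rpow {y : ℝ} (hy : 0 < y) {m₁ : ℤ} (hm₁ : m₁ ≠ 0) (m₂ : ℤ)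
    (r : ℝ) : (y ^ m₂) ^ r = (y ^ m₁) ^ (m₂ * r / m₁) := by
  rw [← rpow_intCast_mul hy.le, ← rpow_intCast_mul hy.le,
    mul_div_cancel₀ _ (Int.cast_ne_zero.2 hm₁)]

theorem trinomial_substitution (m1 m2 n2 : ℤ) (hm1 : 0 < m1) (hn2 : 0 < n2) :
    ∀ y1 y2 : ℝ, 0 < y1 → 0 < y2 →
      ((-1 + y1 ^ m1 + y1 ^ m2 * y2 ^ n2 = 0) ↔
        (0 < y1 ^ m1 ∧ y1 ^ m1 < 1 ∧
          y2 = (y1 ^ m1) ^ (-(m2 : ℝ) / ((m1 : ℝ) * (n2 : ℝ))) *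
            (1 - y1 ^ m1) ^ (1 / (n2 : ℝ)))) := by
  intro y1 y2 hy1 hy2
  have hx : 0 < y1 ^ m1 := zpow_pos hy1 m1
  have hprod : 0 < y1 ^ m2 * y2 ^ n2 := mul_pos (zpow_pos hy1 m2) (zpow_pos hy2 n2)
  have hexp : (y1 ^ m1) ^ (-(m2 : ℝ) / ((m1 : ℝ) * (n2 : ℝ))) =
      (y1 ^ m2) ^ (-1 / (n2 : ℝ)) := by
    rw [zpow_rpow_eq_zpow_rpow hy1 hm1.ne' m2 (-1 / (n2 : ℝ))]
    congr 1
    ring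
  have solve (hlt : y1 ^ m1 < 1) := mul_zpow_eq_iff_eq_mul_rpow (zpow_pos hy1 m2) hy2
    (sub_pos.2 hlt) hn2.ne'
  rw [hexp]
  constructor
  · intro h
    have hlt : y1 ^ m1 < 1 := by linarith
    exact ⟨hx, hlt, (solve hlt).1 (by linarith)⟩
  · rintro ⟨-, hlt, h⟩
    linarith [(solve hlt).2 h]
end

section
/- Define φ₀ : (0,1) → ℝ by φ₀(x) = (44/31)^{5/6} · x^{1/6} (1−x)^{1/3} (−11/4 + 9x/4) / (−35/12 + 11x/4). Then the equation φ₀(x) = 1 has at least 4 solutions in the open interval (0,1). -/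
noncomputable def φ₀ (x : ℝ) : ℝ :=
  (44 / 31 : ℝ) ^ (5 / 6 : ℝ) * x ^ (1 / 6 : ℝ) * (1 - x) ^ (1 / 3 : ℝ) *
    (-11 / 4 + 9 * x / 4) / (-35 / 12 + 11 * x / 4)

/-! On `(0,1)` the factors `-11/4 + 9x/4` and `-35/12 + 11x/4` are both negative, so `φ₀ ≥ 0`
there and `φ₀ x = 1` is equivalent to `φ₀ x ^ 6 = 1`. Raising to the sixth power clears the
fractional exponents, which turns the equation into `phi0Poly x = 0` for a polynomial `phi0Poly`
of degree 9. Evaluating it at `1/2, 3/5, 39/50, 9/10, 19/20` gives four sign changes, hence four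
roots by the intermediate value theorem. -/

open Set

theorem exists_mem_Ioo_eq_zero_of_mul_neg {α : Type*} [ConditionallyCompleteLinearOrder α]
    [DenselyOrdered α] [TopologicalSpace α] [OrderTopology α] {f : α → ℝ} {a b : α}
    (hab : a ≤ b) (hf : ContinuousOn f (Icc a b)) (h : f a * f b < 0) :
    ∃ c ∈ Ioo a b, f c = 0 := by
  rcases mul_neg_iff.mp h with ⟨ha, hb⟩ | ⟨ha, hb⟩
  · exact intermediate_value_Ioo' hab hf ⟨hb, ha⟩
  · exact intermediate_value_Ioo hab hf ⟨ha, hb⟩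

noncomputable def phi0Poly (x : ℝ) : ℝ :=
  (44 / 31 : ℝ) ^ 5 * x * (1 - x) ^ 2 * (-11 / 4 + 9 * x / 4) ^ 6 - (-35 / 12 + 11 * x / 4) ^ 6

theorem continuous_phi0Poly : Continuous phi0Poly := by
  unfold phi0Poly
  fun_prop

theorem rpow_div_pow_of_nonneg {a : ℝ} (ha : 0 ≤ a) (k n : ℕ) (hn : n ≠ 0) :
    (a ^ ((k : ℝ) / n)) ^ n = a ^ k := by
  rw [← Real.rpow_natCast (a ^ _), ← Real.rpow_mul ha, div_mul_cancel₀ _ (by exact_mod_cast hn),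
    Real.rpow_natCast]

section UnitInterval

variable {x : ℝ} (hx : x ∈ Ioo (0 : ℝ) 1)
include hx

theorem denominator_phi0_neg : -35 / 12 + 11 * x / 4 < 0 := by
  linarith [hx.2]

theorem phi0_nonneg : 0 ≤ φ₀ x := by
  have hden := denominator_phi0_neg hx
  obtain ⟨hx0, hx1⟩ := hx
  refine div_nonneg_of_nonpos (mul_nonpos_of_nonneg_of_nonpos (by positivity) ?_) hden.le
  linarith

theorem phi0_pow_six : φ₀ x ^ 6 =
    (44 / 31 : ℝ) ^ 5 * x * (1 - x) ^ 2 * (-11 / 4 + 9 * x / 4) ^ 6 /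
      (-35 / 12 + 11 * x / 4) ^ 6 := by
  have hc := rpow_div_pow_of_nonneg (a := 44 / 31) (by norm_num) 5 6 (by norm_num)
  have hx6 := rpow_div_pow_of_nonneg hx.1.le 1 6 (by norm_num)
  have hy3 := rpow_div_pow_of_nonneg (sub_nonneg.mpr hx.2.le) 1 3 (by norm_num)
  simp only [Nat.cast_ofNat, Nat.cast_one, pow_one] at hc hx6 hy3
  have hy6 : ((1 - x) ^ (1 / 3 : ℝ)) ^ 6 = (1 - x) ^ 2 := by
    rw [show 6 = 3 * 2 from rfl, pow_mul, hy3]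
  rw [φ₀, div_pow, mul_pow, mul_pow, mul_pow, hc, hx6, hy6]

theorem phi0_eq_one_of_phi0Poly_eq_zero (h : phi0Poly x = 0) : φ₀ x = 1 := by
  rw [← pow_eq_one_iff_of_nonneg (phi0_nonneg hx) (by norm_num : 6 ≠ 0), phi0_pow_six hx,
    div_eq_one_iff_eq (pow_ne_zero _ (denominator_phi0_neg hx).ne)]
  exact sub_eq_zero.mp h

end UnitInterval

theorem exists_phi0_eq_one_mem_Ioo {a b : ℝ} (ha : 0 ≤ a) (hab : a ≤ b) (hb : b ≤ 1)
    (h : phi0Poly a * phi0Poly b < 0) : ∃ x ∈ Ioo a b, φ₀ x = 1 := by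
  obtain ⟨x, hx, hx0⟩ :=
    exists_mem_Ioo_eq_zero_of_mul_neg hab continuous_phi0Poly.continuousOn h
  exact ⟨x, hx, phi0_eq_one_of_phi0Poly_eq_zero ⟨ha.trans_lt hx.1, hx.2.trans_le hb⟩ hx0⟩

theorem phi0_eq_one_has_four_solutions :
    ∃ x1 x2 x3 x4 : ℝ, x1 ∈ Set.Ioo (0 : ℝ) 1 ∧ x2 ∈ Set.Ioo (0 : ℝ) 1 ∧
      x3 ∈ Set.Ioo (0 : ℝ) 1 ∧ x4 ∈ Set.Ioo (0 : ℝ) 1 ∧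
      x1 < x2 ∧ x2 < x3 ∧ x3 < x4 ∧
      φ₀ x1 = 1 ∧ φ₀ x2 = 1 ∧ φ₀ x3 = 1 ∧ φ₀ x4 = 1 := by
  obtain ⟨x1, ⟨h1l, h1r⟩, hx1⟩ := exists_phi0_eq_one_mem_Ioo (a := 1 / 2) (b := 3 / 5)
    (by norm_num) (by norm_num) (by norm_num) (by norm_num [phi0Poly])
  obtain ⟨x2, ⟨h2l, h2r⟩, hx2⟩ := exists_phi0_eq_one_mem_Ioo (a := 3 / 5) (b := 39 / 50)
    (by norm_num) (by norm_num) (by norm_num) (by norm_num [phi0Poly])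
  obtain ⟨x3, ⟨h3l, h3r⟩, hx3⟩ := exists_phi0_eq_one_mem_Ioo (a := 39 / 50) (b := 9 / 10)
    (by norm_num) (by norm_num) (by norm_num) (by norm_num [phi0Poly])
  obtain ⟨x4, ⟨h4l, h4r⟩, hx4⟩ := exists_phi0_eq_one_mem_Ioo (a := 9 / 10) (b := 19 / 20)
    (by norm_num) (by norm_num) (by norm_num) (by norm_num [phi0Poly])
  refine ⟨x1, x2, x3, x4, ⟨?_, ?_⟩, ⟨?_, ?_⟩, ⟨?_, ?_⟩, ⟨?_, ?_⟩, ?_, ?_, ?_, hx1, hx2, hx3, hx4⟩ <;>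
    linarith
end
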